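/- arXiv:1112.4673 — 4 statements merged into one kernel-verified Lean document; each statement's English description precedes it below -/
import Mathlib

section
/- Let g be a C² function on an open set D ⊂ ℝ^{n-1} with g > 0, and suppose the Hessian of Φ(u) = (|u|² + g(u)²)/2 is positive semidefinite at a point u₀ ∈ D. Then for every b with 0 < b < g(u₀), the Hessian of Φ_{(a,b)}(u) = (|u−a|² + (g(u)−b)²)/2 at u₀ is positive definite; in fact for every unit vector ξ one has ξᵀ (∇²Φ_{(a,b)})(u₀) ξ ≥ min(1/2, b/(2(g(u₀)−b))). -/
/-!
Write `c = g u₀`, `H = ∇²g(u₀)` and `Φ_{(a,t)}(u) = (‖u - a‖² + (g u - t)²)/2`. Then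
`ξᵀ ∇²Φ_{(a,t)}(u₀) ξ = ‖ξ‖² + (Dg(u₀) ξ)² + (c - t) ξᵀHξ`, independently of `a`, and so
`ξᵀ ∇²Φ_{(a,b)}(u₀) ξ = (b/c)(‖ξ‖² + (Dg(u₀) ξ)²) + ((c - b)/c) ξᵀ ∇²Φ(u₀) ξ ≥ (b/c)‖ξ‖²`
when `0 < b < c`. Finally `b/c ≥ min(1/2, b/(2(c - b)))`, according to whether `c ≤ 2b`.
-/

section

variable {E : Type*} [NormedAddCommGroup E] [InnerProductSpace ℝ E]

noncomputable def halfSqDistGraph (g : E → ℝ) (a : E) (t : ℝ) (u : E) : ℝ :=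
  (‖u - a‖ ^ 2 + (g u - t) ^ 2) / 2

theorem hasFDerivAt_halfSqDistGraph {g : E → ℝ} {g' : E →L[ℝ] ℝ} {x : E}
    (hg : HasFDerivAt g g' x) (a : E) (t : ℝ) :
    HasFDerivAt (halfSqDistGraph g a t) (innerSL ℝ (x - a) + (g x - t) • g') x := by
  have hhalf : halfSqDistGraph g a t = fun u => (‖u - a‖ ^ 2 + (g u - t) ^ 2) * (1 / 2) := by
    funext u
    exact div_eq_mul_one_div _ _
  rw [hhalf]
  refine (HasFDerivAt.mul_const
    (((hasFDerivAt_id x).sub_const a).norm_sq.add ((hg.sub_const t).pow 2)) _).congr_fderiv ?_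
  ext y
  simp only [one_div, id_eq, map_sub, ContinuousLinearMap.comp_id, Nat.add_one_sub_one, pow_one,
    nsmul_eq_mul, Nat.cast_ofNat, smul_add, add_apply, smul_apply, sub_apply, coe_innerSL_apply,
    smul_eq_mul, ne_eq, OfNat.ofNat_ne_zero, not_false_eq_true, inv_mul_cancel_left₀, add_right_inj]
  ring

theorem fderiv_fderiv_halfSqDistGraph_apply {g : E → ℝ} {u₀ : E} (hg : ContDiffAt ℝ 2 g u₀)
    (a : E) (t : ℝ) (ξ : E) :
    fderiv ℝ (fderiv ℝ (halfSqDistGraph g a t)) u₀ ξ ξ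
      = ‖ξ‖ ^ 2 + fderiv ℝ g u₀ ξ ^ 2 + (g u₀ - t) * fderiv ℝ (fderiv ℝ g) u₀ ξ ξ := by
  have hgrad : fderiv ℝ (halfSqDistGraph g a t)
      =ᶠ[nhds u₀] fun x => innerSL ℝ (x - a) + (g x - t) • fderiv ℝ g x := by
    filter_upwards [hg.eventually (by simp)] with x hx
    exact (hasFDerivAt_halfSqDistGraph (hx.differentiableAt two_ne_zero).hasFDerivAt a t).fderiv
  have hg' : HasFDerivAt (fderiv ℝ g) (fderiv ℝ (fderiv ℝ g) u₀) u₀ :=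
    ((hg.fderiv_right (m := 1) le_rfl).differentiableAt one_ne_zero).hasFDerivAt
  have hhess : HasFDerivAt (fun x => innerSL ℝ (x - a) + (g x - t) • fderiv ℝ g x) _ u₀ :=
    (((innerSL ℝ).hasFDerivAt).comp u₀ ((hasFDerivAt_id u₀).sub_const a)).add
    (((hg.differentiableAt two_ne_zero).hasFDerivAt.sub_const t).smul hg')
  rw [hgrad.fderiv_eq, hhess.fderiv]
  simp only [add_apply, ContinuousLinearMap.comp_apply,
    ContinuousLinearMap.id_apply, smul_apply,
    ContinuousLinearMap.smulRight_apply, smul_eq_mul]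
  have hinner : innerSL ℝ ξ ξ = ‖ξ‖ ^ 2 := real_inner_self_eq_norm_sq ξ
  rw [hinner]
  ring

theorem le_fderiv_fderiv_halfSqDistGraph_apply {g : E → ℝ} {u₀ : E} (hg : ContDiffAt ℝ 2 g u₀)
    {ξ : E} (hpsd : 0 ≤ fderiv ℝ (fderiv ℝ (halfSqDistGraph g 0 0)) u₀ ξ ξ)
    (a : E) {b : ℝ} (hb : 0 < b) (hbg : b < g u₀) :
    b / g u₀ * ‖ξ‖ ^ 2 ≤ fderiv ℝ (fderiv ℝ (halfSqDistGraph g a b)) u₀ ξ ξ := by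
  rw [fderiv_fderiv_halfSqDistGraph_apply hg, sub_zero] at hpsd
  rw [fderiv_fderiv_halfSqDistGraph_apply hg]
  set c := g u₀
  have hc : 0 < c := hb.trans hbg
  have hsplit : ‖ξ‖ ^ 2 + fderiv ℝ g u₀ ξ ^ 2 + (c - b) * fderiv ℝ (fderiv ℝ g) u₀ ξ ξ
      = b / c * ‖ξ‖ ^ 2 + b / c * fderiv ℝ g u₀ ξ ^ 2
        + (c - b) / c * (‖ξ‖ ^ 2 + fderiv ℝ g u₀ ξ ^ 2 + c * fderiv ℝ (fderiv ℝ g) u₀ ξ ξ) := by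
    field_simp
    ring
  rw [hsplit]
  have hgrad_sq : 0 ≤ b / c * fderiv ℝ g u₀ ξ ^ 2 := by positivity
  have hweighted := mul_nonneg (div_nonneg (sub_nonneg.2 hbg.le) hc.le) hpsd
  linarith

end

theorem min_half_le_div_of_lt {b c : ℝ} (hb : 0 < b) (hbc : b < c) :
    min (1 / 2) (b / (2 * (c - b))) ≤ b / c := by
  have hc : 0 < c := hb.trans hbc
  rcases le_or_gt c (2 * b) with h | h
  · exact (min_le_left _ _).trans (by rw [le_div_iff₀ hc]; linarith)
  · exact (min_le_right _ _).trans (by rw [div_le_div_iff₀ (by linarith) hc]; nlinarith)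

theorem stmt_1_general {m : ℕ} (D : Set (EuclideanSpace ℝ (Fin m))) (hD : IsOpen D)
    (g : EuclideanSpace ℝ (Fin m) → ℝ) (hg : ContDiffOn ℝ 2 g D)
    (Φ : EuclideanSpace ℝ (Fin m) → ℝ)
    (hΦ : ∀ u, Φ u = (‖u‖ ^ 2 + (g u) ^ 2) / 2)
    (u₀ : EuclideanSpace ℝ (Fin m)) (hu₀ : u₀ ∈ D)
    (hpsd : ∀ ξ : EuclideanSpace ℝ (Fin m),
      0 ≤ fderiv ℝ (fun x => fderiv ℝ Φ x) u₀ ξ ξ)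
    (a : EuclideanSpace ℝ (Fin m)) (b : ℝ) (hb0 : 0 < b) (hbg : b < g u₀)
    (Φab : EuclideanSpace ℝ (Fin m) → ℝ)
    (hΦab : ∀ u, Φab u = (‖u - a‖ ^ 2 + (g u - b) ^ 2) / 2) :
    (∀ ξ : EuclideanSpace ℝ (Fin m), ‖ξ‖ = 1 →
        min (1 / 2) (b / (2 * (g u₀ - b)))
          ≤ fderiv ℝ (fun x => fderiv ℝ Φab x) u₀ ξ ξ)
      ∧ ∀ ξ : EuclideanSpace ℝ (Fin m), ξ ≠ 0 →
          0 < fderiv ℝ (fun x => fderiv ℝ Φab x) u₀ ξ ξ := by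
  have hg₀ : ContDiffAt ℝ 2 g u₀ := hg.contDiffAt (hD.mem_nhds hu₀)
  obtain rfl : Φ = halfSqDistGraph g 0 0 := funext fun u => by simp [hΦ, halfSqDistGraph]
  obtain rfl : Φab = halfSqDistGraph g a b := funext hΦab
  have hbound (ξ) := le_fderiv_fderiv_halfSqDistGraph_apply hg₀ (hpsd ξ) a hb0 hbg
  refine ⟨fun ξ hξ => ?_, fun ξ hξ => ?_⟩
  · have hunit := hbound ξ
    rw [hξ, one_pow, mul_one] at hunit
    exact (min_half_le_div_of_lt hb0 hbg).trans hunit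
  · have hg₀_pos : 0 < g u₀ := hb0.trans hbg
    have hpos : 0 < b / g u₀ * ‖ξ‖ ^ 2 := by positivity
    exact hpos.trans_le (hbound ξ)

/-- If the Hessian of `Φ(u) = (|u|²+g(u)²)/2` is positive semidefinite at `u₀`,
then for `0 < b < g(u₀)` the Hessian of `Φ_{(a,b)}` at `u₀` is positive definite,
with quadratic form bounded below by `min(1/2, b/(2(g(u₀)−b)))` on unit vectors. -/
theorem stmt_1 {m : ℕ} (D : Set (EuclideanSpace ℝ (Fin m))) (hD : IsOpen D)
    (g : EuclideanSpace ℝ (Fin m) → ℝ) (hg : ContDiffOn ℝ 2 g D)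
    (hgpos : ∀ u ∈ D, 0 < g u)
    (Φ : EuclideanSpace ℝ (Fin m) → ℝ)
    (hΦ : ∀ u, Φ u = (‖u‖ ^ 2 + (g u) ^ 2) / 2)
    (u₀ : EuclideanSpace ℝ (Fin m)) (hu₀ : u₀ ∈ D)
    (hpsd : ∀ ξ : EuclideanSpace ℝ (Fin m),
      0 ≤ fderiv ℝ (fun x => fderiv ℝ Φ x) u₀ ξ ξ)
    (a : EuclideanSpace ℝ (Fin m)) (b : ℝ) (hb0 : 0 < b) (hbg : b < g u₀)
    (Φab : EuclideanSpace ℝ (Fin m) → ℝ)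
    (hΦab : ∀ u, Φab u = (‖u - a‖ ^ 2 + (g u - b) ^ 2) / 2) :
    (∀ ξ : EuclideanSpace ℝ (Fin m), ‖ξ‖ = 1 →
        min (1 / 2) (b / (2 * (g u₀ - b)))
          ≤ fderiv ℝ (fun x => fderiv ℝ Φab x) u₀ ξ ξ)
      ∧ ∀ ξ : EuclideanSpace ℝ (Fin m), ξ ≠ 0 →
          0 < fderiv ℝ (fun x => fderiv ℝ Φab x) u₀ ξ ξ :=
  stmt_1_general D hD g hg Φ hΦ u₀ hu₀ hpsd a b hb0 hbg Φab hΦab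
end

section
/- The map T : (u,v) ↦ (s,t) = (u, (|u|² + v²)/2) is a bijection from the upper half space {(u,v) ∈ ℝ^{n-1}×ℝ : v > 0} onto the epiparabola W = {(s,t) : t > |s|²/2}, and the image under T of every geodesic of the hyperbolic (Poincaré) metric ds² = (|du|² + dv²)/v² is the intersection with W of a Euclidean straight line; conversely every straight line meeting W arises this way. -/
/-!
`T` fixes `u` and lifts `(u, v)` to height `(‖u‖² + v²)/2`, so it is a bijection of `v > 0` onto
`t > ‖s‖²/2`. On the graph `t = ⟪s, a⟫ + c` of an affine function over a line `L`, the equation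
`(‖u‖² + v²)/2 = ⟪u, a⟫ + c` reads `‖u - a‖² + v² = ‖a‖² + 2c`: the preimage of such a
non-vertical line is a semicircle centred at `a`, and the preimage of a vertical line is a
vertical half-line. Since every line of `E × ℝ` is vertical or such a graph, geodesics are exactly
the preimages `U ∩ T⁻¹' ℓ`, whose images are `ℓ ∩ W`.
-/

open scoped RealInnerProductSpace

/-- A straight line in a real vector space. -/
def stmt6.IsLine {V : Type*} [AddCommGroup V] [Module ℝ V] (ℓ : Set V) : Prop :=
  ∃ q d : V, d ≠ 0 ∧ ℓ = {x | ∃ t : ℝ, x = q + t • d}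

/-- Geodesics of the Poincaré metric on the upper half space: vertical half-lines
and vertical semicircles with center on the hyperplane. -/
def stmt6.IsGeodesic {m : ℕ} (γ : Set (EuclideanSpace ℝ (Fin m) × ℝ)) : Prop :=
  (∃ u₀ : EuclideanSpace ℝ (Fin m), γ = {p | p.1 = u₀ ∧ 0 < p.2}) ∨
  (∃ (L : Set (EuclideanSpace ℝ (Fin m))) (a : EuclideanSpace ℝ (Fin m)) (r : ℝ),
      stmt6.IsLine L ∧ a ∈ L ∧ 0 < r ∧
      γ = {p | p.1 ∈ L ∧ 0 < p.2 ∧ ‖p.1 - a‖ ^ 2 + p.2 ^ 2 = r ^ 2})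

namespace stmt6

section Lines

variable {V : Type*} [AddCommGroup V] [Module ℝ V]

theorem setOf_add_smul_eq_vertical (q d : V × ℝ) (h₁ : d.1 = 0) (h₂ : d.2 ≠ 0) :
    {x | ∃ t : ℝ, x = q + t • d} = {x | x.1 = q.1} := by
  ext x
  simp only [Set.mem_ofPred_eq, Prod.ext_iff, Prod.fst_add, Prod.snd_add, Prod.smul_fst,
    Prod.smul_snd, smul_eq_mul, h₁, smul_zero, add_zero]
  refine ⟨fun ⟨_, hx, _⟩ => hx, fun hx => ⟨(x.2 - q.2) / d.2, hx, ?_⟩⟩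
  field_simp
  ring

theorem isLine_vertical (u₀ : V) : IsLine {q : V × ℝ | q.1 = u₀} :=
  ⟨(u₀, 0), (0, 1), fun h => one_ne_zero (congrArg Prod.snd h),
    (setOf_add_smul_eq_vertical (u₀, 0) (0, 1) rfl one_ne_zero).symm⟩

end Lines

variable {E : Type*} [NormedAddCommGroup E]

noncomputable def epiparabolaMap (p : E × ℝ) : E × ℝ := (p.1, (‖p.1‖ ^ 2 + p.2 ^ 2) / 2)

theorem bijOn_epiparabolaMap :
    Set.BijOn (epiparabolaMap (E := E)) {p | 0 < p.2} {q | ‖q.1‖ ^ 2 / 2 < q.2} := by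
  refine ⟨fun p (hp : 0 < p.2) => ?_, fun p (hp : 0 < p.2) p' (hp' : 0 < p'.2) h => ?_,
    fun q (hq : ‖q.1‖ ^ 2 / 2 < q.2) => ?_⟩
  · change ‖p.1‖ ^ 2 / 2 < (‖p.1‖ ^ 2 + p.2 ^ 2) / 2
    nlinarith
  · obtain ⟨h₁, h₂⟩ := Prod.ext_iff.1 h
    simp only [epiparabolaMap] at h₁ h₂
    rw [h₁] at h₂
    exact Prod.ext h₁ (by nlinarith)
  · refine ⟨(q.1, √(2 * q.2 - ‖q.1‖ ^ 2)), Real.sqrt_pos.2 (by linarith), Prod.ext rfl ?_⟩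
    simp only [epiparabolaMap]
    rw [Real.sq_sqrt (by linarith)]
    ring

theorem image_inter_preimage_epiparabolaMap (ℓ : Set (E × ℝ)) :
    epiparabolaMap '' ({p | 0 < p.2} ∩ epiparabolaMap ⁻¹' ℓ) = ℓ ∩ {q | ‖q.1‖ ^ 2 / 2 < q.2} := by
  rw [Set.image_inter_preimage, bijOn_epiparabolaMap.image_eq, Set.inter_comm]

theorem inter_preimage_vertical (u₀ : E) :
    {p | 0 < p.2} ∩ epiparabolaMap ⁻¹' {q : E × ℝ | q.1 = u₀} = {p | p.1 = u₀ ∧ 0 < p.2} := by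
  ext p
  exact and_comm

variable [InnerProductSpace ℝ E]

theorem inter_preimage_graph (L : Set E) (a : E) (c : ℝ) :
    {p | 0 < p.2} ∩ epiparabolaMap ⁻¹' {q : E × ℝ | q.1 ∈ L ∧ q.2 = ⟪q.1, a⟫ + c} =
      {p | p.1 ∈ L ∧ 0 < p.2 ∧ ‖p.1 - a‖ ^ 2 + p.2 ^ 2 = ‖a‖ ^ 2 + 2 * c} := by
  ext p
  simp only [Set.mem_inter_iff, Set.mem_preimage, Set.mem_ofPred_eq, epiparabolaMap,
    norm_sub_sq_real]
  constructor
  · rintro ⟨hv, hL, h⟩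
    exact ⟨hL, hv, by linarith⟩
  · rintro ⟨hL, hv, h⟩
    exact ⟨hv, hL, by linarith⟩

theorem setOf_add_smul_eq_graph (q d : E × ℝ) (a : E) (hda : ⟪d.1, a⟫ = d.2) :
    {x | ∃ t : ℝ, x = q + t • d} =
      {x | x.1 ∈ {y | ∃ t : ℝ, y = q.1 + t • d.1} ∧ x.2 = ⟪x.1, a⟫ + (q.2 - ⟪q.1, a⟫)} := by
  have graph_eq (t : ℝ) : q.2 + t * d.2 = ⟪q.1 + t • d.1, a⟫ + (q.2 - ⟪q.1, a⟫) := by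
    rw [inner_add_left, real_inner_smul_left, hda]
    ring
  ext x
  simp only [Set.mem_ofPred_eq, Prod.ext_iff, Prod.fst_add, Prod.snd_add, Prod.smul_fst,
    Prod.smul_snd, smul_eq_mul]
  constructor
  · rintro ⟨t, h₁, h₂⟩
    exact ⟨⟨t, h₁⟩, by rw [h₂, h₁, graph_eq]⟩
  · rintro ⟨⟨t, h₁⟩, h₂⟩
    exact ⟨t, h₁, by rw [h₂, h₁, graph_eq]⟩

theorem exists_mem_inner_eq (b e : E) (he : e ≠ 0) (s : ℝ) :
    ∃ a ∈ {y | ∃ t : ℝ, y = b + t • e}, ⟪e, a⟫ = s := by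
  have he' : ‖e‖ ^ 2 ≠ 0 := by positivity
  refine ⟨b + ((s - ⟪e, b⟫) / ‖e‖ ^ 2) • e, ⟨_, rfl⟩, ?_⟩
  rw [inner_add_right, real_inner_smul_right, real_inner_self_eq_norm_sq]
  field_simp
  ring

theorem isLine_graph {L : Set E} (hL : IsLine L) (a : E) (c : ℝ) :
    IsLine {q : E × ℝ | q.1 ∈ L ∧ q.2 = ⟪q.1, a⟫ + c} := by
  obtain ⟨b, e, he, rfl⟩ := hL
  refine ⟨(b, ⟪b, a⟫ + c), (e, ⟪e, a⟫), fun h => he (congrArg Prod.fst h), ?_⟩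
  rw [setOf_add_smul_eq_graph _ _ a rfl, add_sub_cancel_left]

section Geodesics

variable {m : ℕ}

local notation "E" => EuclideanSpace ℝ (Fin m)

theorem IsGeodesic.eq_inter_preimage {γ : Set (E × ℝ)} (hγ : IsGeodesic γ) :
    ∃ ℓ, IsLine ℓ ∧ γ = {p | 0 < p.2} ∩ epiparabolaMap ⁻¹' ℓ := by
  obtain ⟨u₀, rfl⟩ | ⟨L, a, r, hL, -, -, rfl⟩ := hγ
  · exact ⟨_, isLine_vertical u₀, (inter_preimage_vertical u₀).symm⟩
  · refine ⟨_, isLine_graph hL a ((r ^ 2 - ‖a‖ ^ 2) / 2), ?_⟩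
    rw [inter_preimage_graph, show ‖a‖ ^ 2 + 2 * ((r ^ 2 - ‖a‖ ^ 2) / 2) = r ^ 2 by ring]

theorem isGeodesic_of_graph {L : Set E} (hL : IsLine L) {a : E} (ha : a ∈ L) (c : ℝ)
    (hne : ({p | 0 < p.2} ∩
      epiparabolaMap ⁻¹' {q : E × ℝ | q.1 ∈ L ∧ q.2 = ⟪q.1, a⟫ + c}).Nonempty) :
    IsGeodesic ({p | 0 < p.2} ∩
      epiparabolaMap ⁻¹' {q : E × ℝ | q.1 ∈ L ∧ q.2 = ⟪q.1, a⟫ + c}) := by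
  rw [inter_preimage_graph] at hne ⊢
  obtain ⟨p, -, hv, hp⟩ := hne
  have hpos : 0 < ‖a‖ ^ 2 + 2 * c := by nlinarith [sq_nonneg ‖p.1 - a‖]
  refine Or.inr ⟨L, a, √(‖a‖ ^ 2 + 2 * c), hL, ha, Real.sqrt_pos.2 hpos, ?_⟩
  rw [Real.sq_sqrt hpos.le]

theorem isGeodesic_inter_preimage {ℓ : Set (E × ℝ)} (hℓ : IsLine ℓ)
    (hne : ({p | 0 < p.2} ∩ epiparabolaMap ⁻¹' ℓ).Nonempty) :
    IsGeodesic ({p | 0 < p.2} ∩ epiparabolaMap ⁻¹' ℓ) := by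
  obtain ⟨q, d, hd, rfl⟩ := hℓ
  by_cases hd₁ : d.1 = 0
  · rw [setOf_add_smul_eq_vertical q d hd₁ fun hd₂ => hd (Prod.ext hd₁ hd₂),
      inter_preimage_vertical]
    exact Or.inl ⟨q.1, rfl⟩
  · obtain ⟨a, ha, hda⟩ := exists_mem_inner_eq q.1 d.1 hd₁ d.2
    rw [setOf_add_smul_eq_graph q d a hda] at hne ⊢
    exact isGeodesic_of_graph ⟨q.1, d.1, hd₁, rfl⟩ ha _ hne

end Geodesics

end stmt6

/-- `T(u,v) = (u, (|u|²+v²)/2)` is a bijection of the upper half space onto the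
epiparabola `W = {t > |s|²/2}` which maps Poincaré geodesics onto intersections
of straight lines with `W`, and conversely. -/
theorem stmt_6 {m : ℕ}
    (T : EuclideanSpace ℝ (Fin m) × ℝ → EuclideanSpace ℝ (Fin m) × ℝ)
    (hT : ∀ p, T p = (p.1, (‖p.1‖ ^ 2 + p.2 ^ 2) / 2))
    (U W : Set (EuclideanSpace ℝ (Fin m) × ℝ))
    (hU : U = {p | 0 < p.2})
    (hW : W = {q | ‖q.1‖ ^ 2 / 2 < q.2}) :
    Set.BijOn T U W
      ∧ (∀ γ, stmt6.IsGeodesic γ → ∃ ℓ, stmt6.IsLine ℓ ∧ T '' γ = ℓ ∩ W)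
      ∧ (∀ ℓ, stmt6.IsLine ℓ → (ℓ ∩ W).Nonempty →
          ∃ γ, stmt6.IsGeodesic γ ∧ T '' γ = ℓ ∩ W) := by
  obtain rfl : T = stmt6.epiparabolaMap := funext hT
  subst hU hW
  refine ⟨stmt6.bijOn_epiparabolaMap, fun γ hγ => ?_, fun ℓ hℓ hne => ?_⟩
  · obtain ⟨ℓ, hℓ, rfl⟩ := hγ.eq_inter_preimage
    exact ⟨ℓ, hℓ, stmt6.image_inter_preimage_epiparabolaMap ℓ⟩
  · rw [← stmt6.image_inter_preimage_epiparabolaMap] at hne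
    exact ⟨_, stmt6.isGeodesic_inter_preimage hℓ hne.of_image,
      stmt6.image_inter_preimage_epiparabolaMap ℓ⟩
end

section
/- Let f : ℝ^m → ℝ be continuous, equal to |u|²/2 outside a compact set, and f(u) ≥ 0 pointwise with f not convex. Let Ψ(u) = sup{L(u) : L affine, L ≤ f} be its convex envelope. Then there exist a point u₀ with Ψ(u₀) < f(u₀) and an affine function L ≤ f with L(u₀) = Ψ(u₀) such that equality L(u) = f(u) holds for at least two distinct points u. -/
/-!
Ψ is a convex minorant of `f` and `f` is not convex, so `Ψ u₀ < f u₀` somewhere. Being convex and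
finite on a finite-dimensional space, Ψ is continuous and has a supporting affine minorant `L` at
`u₀`. If `u₀` were not in the closed convex hull of the contact set `{L = f}`, a linear functional
`h` separating them would be negative on the contact set and positive at `u₀`; since `f - L` is
positive away from the contact set and `f` grows quadratically at infinity, `L + ε h ≤ f` for small
`ε > 0`, contradicting the maximality of `L u₀ = Ψ u₀`. A point outside a set yet in the closed
convex hull of it forces the set to have two points.
-/

open Set Filter

noncomputable def affineEnvelope {E : Type*} [AddCommGroup E] [Module ℝ E] (f : E → ℝ) (u : E) :
    ℝ :=
  sSup {y | ∃ L : E →ᵃ[ℝ] ℝ, (∀ v, L v ≤ f v) ∧ y = L u}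

section Envelope

variable {E : Type*} [AddCommGroup E] [Module ℝ E] {f : E → ℝ}

theorem le_affineEnvelope {L : E →ᵃ[ℝ] ℝ} (hL : ∀ v, L v ≤ f v) (u : E) :
    L u ≤ affineEnvelope f u :=
  le_csSup ⟨f u, by rintro y ⟨L', hL', rfl⟩; exact hL' u⟩ ⟨L, hL, rfl⟩

theorem affineEnvelope_le (hmin : ∃ L : E →ᵃ[ℝ] ℝ, ∀ v, L v ≤ f v) (u : E) :
    affineEnvelope f u ≤ f u :=
  csSup_le (let ⟨L, hL⟩ := hmin; ⟨L u, L, hL, rfl⟩) (by rintro y ⟨L, hL, rfl⟩; exact hL u)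

theorem convexOn_affineEnvelope (hmin : ∃ L : E →ᵃ[ℝ] ℝ, ∀ v, L v ≤ f v) :
    ConvexOn ℝ univ (affineEnvelope f) := by
  refine ⟨convex_univ, fun x _ y _ a b ha hb hab => ?_⟩
  obtain ⟨L₀, hL₀⟩ := hmin
  refine csSup_le ⟨L₀ _, L₀, hL₀, rfl⟩ ?_
  rintro _ ⟨L, hL, rfl⟩
  rw [Convex.combo_affine_apply hab]
  exact add_le_add (mul_le_mul_of_nonneg_left (le_affineEnvelope hL x) ha)
    (mul_le_mul_of_nonneg_left (le_affineEnvelope hL y) hb)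

theorem exists_affineEnvelope_lt (hmin : ∃ L : E →ᵃ[ℝ] ℝ, ∀ v, L v ≤ f v)
    (hnc : ¬ ConvexOn ℝ univ f) : ∃ u, affineEnvelope f u < f u := by
  by_contra! h
  have heq : affineEnvelope f = f := funext fun u => (affineEnvelope_le hmin u).antisymm (h u)
  exact hnc (heq ▸ convexOn_affineEnvelope hmin)

end Envelope

theorem Set.nontrivial_of_mem_closure_convexHull {E : Type*} [TopologicalSpace E] [T1Space E]
    [AddCommGroup E] [Module ℝ E] {s : Set E} {x : E} (hx : x ∈ closure (convexHull ℝ s))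
    (hxs : x ∉ s) : s.Nontrivial := by
  by_contra h
  rw [Set.not_nontrivial_iff] at h
  rw [h.convex.convexHull_eq, h.closure_eq] at hx
  exact hxs hx

theorem exists_pos_mul_le {X : Type*} [TopologicalSpace X] {g h : X → ℝ} (hg : Continuous g)
    (hh : Continuous h) (hg₀ : ∀ x, 0 ≤ g x) (hpos : ∀ x, 0 ≤ h x → 0 < g x)
    (hinf : ∀ᶠ x in cocompact X, h x ≤ g x) : ∃ ε > 0, ∀ x, ε * h x ≤ g x := by
  obtain ⟨Q, hQ, hQc⟩ := mem_cocompact.mp hinf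
  set C := Q ∩ {x | 0 ≤ h x}
  have hC : IsCompact C := hQ.inter_right (isClosed_le continuous_const hh)
  obtain ⟨M, hM⟩ := hC.bddAbove_image
    (hh.continuousOn.div hg.continuousOn fun x hx => (hpos x hx.2).ne')
  refine ⟨(max M 1)⁻¹, by positivity, fun x => ?_⟩
  rw [inv_mul_le_iff₀ (by positivity)]
  have hg_le : g x ≤ max M 1 * g x := le_mul_of_one_le_left (hg₀ x) (le_max_right _ _)
  rcases lt_or_ge (h x) 0 with hneg | hnn
  · linarith [hg₀ x]
  by_cases hxQ : x ∈ Q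
  · have hq : h x / g x ≤ M := hM ⟨x, ⟨hxQ, hnn⟩, rfl⟩
    rw [div_le_iff₀ (hpos x hnn)] at hq
    exact hq.trans (mul_le_mul_of_nonneg_right (le_max_left _ _) (hg₀ x))
  · exact (hQc hxQ).trans hg_le

section FiniteDimensional

variable {E : Type*} [NormedAddCommGroup E] [NormedSpace ℝ E] [FiniteDimensional ℝ E]

theorem AffineMap.eventually_le_half_sq_norm (A : E →ᵃ[ℝ] ℝ) :
    ∀ᶠ v in cocompact E, A v ≤ ‖v‖ ^ 2 / 2 := by
  set ℓ := LinearMap.toContinuousLinearMap A.linear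
  have hA : ∀ v, A v ≤ ‖ℓ‖ * ‖v‖ + |A 0| := fun v => by
    have h1 : A v - A 0 = ℓ v := by simpa [ℓ] using (A.linearMap_vsub v 0).symm
    have h2 : ℓ v ≤ ‖ℓ‖ * ‖v‖ := (le_abs_self _).trans (ℓ.le_opNorm v)
    linarith [le_abs_self (A 0)]
  filter_upwards [tendsto_norm_cocompact_atTop.eventually_ge_atTop (2 * (‖ℓ‖ + |A 0|) + 2)]
    with v hv
  nlinarith [hA v, norm_nonneg ℓ, abs_nonneg (A 0)]

theorem ConvexOn.exists_affineMap_le_eq {Ψ : E → ℝ} (hΨ : ConvexOn ℝ univ Ψ) (u₀ : E) :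
    ∃ L : E →ᵃ[ℝ] ℝ, (∀ v, L v ≤ Ψ v) ∧ L u₀ = Ψ u₀ := by
  have hcont : Continuous Ψ := continuousOn_univ.mp (hΨ.continuousOn isOpen_univ)
  have hS : IsOpen {p : E × ℝ | Ψ p.1 < p.2} :=
    isOpen_lt (hcont.comp continuous_fst) continuous_snd
  obtain ⟨φ, hφ⟩ := geometric_hahn_banach_open_point (by simpa using hΨ.convex_strict_epigraph) hS
    (x := (u₀, Ψ u₀)) (lt_irrefl (Ψ u₀))
  set g := φ.comp (ContinuousLinearMap.inl ℝ E ℝ)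
  set c := φ (0, 1)
  have hsplit : ∀ x t, φ (x, t) = g x + t * c := fun x t => by
    rw [show (x, t) = (x, 0) + t • ((0 : E), (1 : ℝ)) by simp, map_add, map_smul]
    rfl
  have hsep : ∀ x t, Ψ x < t → g x + t * c < g u₀ + Ψ u₀ * c := fun x t hxt => by
    simpa only [hsplit] using hφ (x, t) hxt
  have hc : c < 0 := by linarith [hsep u₀ (Ψ u₀ + 1) (by linarith)]
  refine ⟨AffineMap.const ℝ E (Ψ u₀) +
    (-c)⁻¹ • ((g : E →ₗ[ℝ] ℝ).toAffineMap - AffineMap.const ℝ E (g u₀)), fun v => ?_, by simp⟩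
  refine le_of_forall_gt_imp_ge_of_dense fun t ht => ?_
  have h : (-c)⁻¹ * (g v - g u₀) ≤ t - Ψ u₀ := by
    rw [inv_mul_le_iff₀ (by linarith)]
    nlinarith [hsep v t ht]
  simp only [AffineMap.coe_add, AffineMap.coe_const, AffineMap.coe_smul, AffineMap.coe_sub,
    Pi.add_apply, Pi.smul_apply, Pi.sub_apply, Function.const_apply, smul_eq_mul,
    LinearMap.coe_toAffineMap, ContinuousLinearMap.coe_coe]
  linarith

theorem mem_closure_convexHull_of_maximal_affineMap_le {f : E → ℝ} (hf : Continuous f)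
    (hgrowth : ∀ A : E →ᵃ[ℝ] ℝ, ∀ᶠ v in cocompact E, A v ≤ f v) {L : E →ᵃ[ℝ] ℝ}
    (hLf : ∀ v, L v ≤ f v) {u₀ : E}
    (hmax : ∀ L' : E →ᵃ[ℝ] ℝ, (∀ v, L' v ≤ f v) → L' u₀ ≤ L u₀) :
    u₀ ∈ closure (convexHull ℝ {v | L v = f v}) := by
  by_contra hu₀
  obtain ⟨g, δ, hT, hu₀δ⟩ :=
    geometric_hahn_banach_closed_point (convex_convexHull ℝ _).closure isClosed_closure hu₀
  set h : E →ᵃ[ℝ] ℝ := (g : E →ₗ[ℝ] ℝ).toAffineMap - AffineMap.const ℝ E δ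
  have hpos : ∀ v, 0 ≤ h v → 0 < f v - L v := fun v hv => by
    refine sub_pos.2 ((hLf v).lt_of_ne fun hv' => ?_)
    have hδ : δ ≤ g v := by simpa [h] using hv
    exact (hT v (subset_closure (subset_convexHull ℝ _ hv'))).not_ge hδ
  obtain ⟨ε, hε, hεh⟩ := exists_pos_mul_le (g := fun v => f v - L v)
    (hf.sub L.continuous_of_finiteDimensional)
    h.continuous_of_finiteDimensional (fun v => sub_nonneg.2 (hLf v)) hpos
    ((hgrowth (L + h)).mono fun v hv => by
      simp only [AffineMap.coe_add, Pi.add_apply] at hv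
      linarith)
  have htilt : ε * (g u₀ - δ) ≤ 0 := by
    simpa [h] using hmax (L + ε • h) fun v => by
      simp only [AffineMap.coe_add, AffineMap.coe_smul, Pi.add_apply, Pi.smul_apply, smul_eq_mul]
      linarith [hεh v]
  exact htilt.not_gt (mul_pos hε (sub_pos.2 hu₀δ))

end FiniteDimensional

/-- If `f ≥ 0` is continuous, equals `|u|²/2` outside a compact set, and is not
convex, then its convex envelope `Ψ` (supremum of affine minorants) lies strictly
below `f` at some point `u₀`, the supremum is attained there by an affine minorant
`L`, and `L` touches `f` in at least two distinct points. -/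
theorem stmt_9 {m : ℕ} (f : EuclideanSpace ℝ (Fin m) → ℝ)
    (hf : Continuous f)
    (K : Set (EuclideanSpace ℝ (Fin m))) (hK : IsCompact K)
    (hout : ∀ u ∉ K, f u = ‖u‖ ^ 2 / 2)
    (hfpos : ∀ u, 0 ≤ f u)
    (hnotconvex : ¬ ConvexOn ℝ Set.univ f)
    (Ψ : EuclideanSpace ℝ (Fin m) → ℝ)
    (hΨ : ∀ u, Ψ u = sSup {y | ∃ L : EuclideanSpace ℝ (Fin m) →ᵃ[ℝ] ℝ,
        (∀ v, L v ≤ f v) ∧ y = L u}) :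
    ∃ u₀ : EuclideanSpace ℝ (Fin m), Ψ u₀ < f u₀ ∧
      ∃ L : EuclideanSpace ℝ (Fin m) →ᵃ[ℝ] ℝ,
        (∀ v, L v ≤ f v) ∧ L u₀ = Ψ u₀ ∧
          ∃ u₁ u₂, u₁ ≠ u₂ ∧ L u₁ = f u₁ ∧ L u₂ = f u₂ := by
  obtain rfl : Ψ = affineEnvelope f := funext hΨ
  have hmin : ∃ L : EuclideanSpace ℝ (Fin m) →ᵃ[ℝ] ℝ, ∀ v, L v ≤ f v :=
    ⟨AffineMap.const ℝ _ 0, hfpos⟩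
  obtain ⟨u₀, hu₀⟩ := exists_affineEnvelope_lt hmin hnotconvex
  obtain ⟨L, hLΨ, hLu₀⟩ := (convexOn_affineEnvelope hmin).exists_affineMap_le_eq u₀
  have hLf : ∀ v, L v ≤ f v := fun v => (hLΨ v).trans (affineEnvelope_le hmin v)
  have hgrowth : ∀ A : EuclideanSpace ℝ (Fin m) →ᵃ[ℝ] ℝ, ∀ᶠ v in cocompact _, A v ≤ f v :=
    fun A => (A.eventually_le_half_sq_norm.and hK.compl_mem_cocompact).mono
      fun v ⟨hA, hvK⟩ => (hout v hvK).symm ▸ hA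
  have hcontact := mem_closure_convexHull_of_maximal_affineMap_le hf hgrowth hLf
    fun L' hL' => hLu₀ ▸ le_affineEnvelope hL' u₀
  obtain ⟨u₁, h₁, u₂, h₂, hne⟩ := Set.nontrivial_of_mem_closure_convexHull hcontact
    fun h : L u₀ = f u₀ => hu₀.ne (hLu₀ ▸ h)
  exact ⟨u₀, hu₀, L, hLf, hLu₀, u₁, u₂, hne, h₁, h₂⟩
end

section
/- Let u be smooth with Δu = 1 on open Ω⁺ ⊂ ℝⁿ and define the map σ : Ω⁺ → ℝⁿ by σ = (ω_{1n}, …, ω_{n-1,n}, ρ) with ω_{jn} = x_j ∂u/∂x_n − x_n ∂u/∂x_j and ρ = |x|²/2 − x·∇u − (n−2)u. Then σ, viewed as a vector field, is divergence free: the trace of the Jacobian matrix of σ is identically zero. -/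
/-- The map `σ = (ω_{1n},…,ω_{n−1,n}, ρ)` is divergence free: the trace of its
Jacobian vanishes identically. Here the ambient dimension is `n + 1`. -/
theorem stmt_12 {n : ℕ} (Ω : Set (EuclideanSpace ℝ (Fin (n + 1)))) (hΩ : IsOpen Ω)
    (u : EuclideanSpace ℝ (Fin (n + 1)) → ℝ) (hu : ContDiffOn ℝ (⊤ : ℕ∞) u Ω)
    (hΔ : ∀ x ∈ Ω, ∑ i : Fin (n + 1),
      fderiv ℝ (fun y => fderiv ℝ u y (EuclideanSpace.single i 1)) x
        (EuclideanSpace.single i 1) = 1)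
    (ρ : EuclideanSpace ℝ (Fin (n + 1)) → ℝ)
    (hρ : ∀ x, ρ x = ‖x‖ ^ 2 / 2
        - (∑ i : Fin (n + 1), x i * fderiv ℝ u x (EuclideanSpace.single i 1))
        - (((n : ℝ) + 1) - 2) * u x)
    (ω : Fin (n + 1) → Fin (n + 1) → EuclideanSpace ℝ (Fin (n + 1)) → ℝ)
    (hω : ∀ k j x, ω k j x = x k * fderiv ℝ u x (EuclideanSpace.single j 1)
        - x j * fderiv ℝ u x (EuclideanSpace.single k 1)) :
    ∀ x ∈ Ω,
      (∑ i : Fin n, fderiv ℝ (ω i.castSucc (Fin.last n)) x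
          (EuclideanSpace.single i.castSucc 1))
        + fderiv ℝ ρ x (EuclideanSpace.single (Fin.last n) 1) = 0 := by
  intro x hx
  set e : Fin (n + 1) → EuclideanSpace ℝ (Fin (n + 1)) :=
    fun i => EuclideanSpace.single i 1 with he
  have hxn : Ω ∈ nhds x := hΩ.mem_nhds hx
  have hcd : ContDiffAt ℝ (⊤ : ℕ∞) u x := hu.contDiffAt hxn
  have hudiff : DifferentiableAt ℝ u x := hcd.differentiableAt (by norm_num)
  set B : EuclideanSpace ℝ (Fin (n + 1)) →L[ℝ] EuclideanSpace ℝ (Fin (n + 1)) →L[ℝ] ℝ :=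
    fderiv ℝ (fderiv ℝ u) x with hB
  have hBd : HasFDerivAt (fderiv ℝ u) B x :=
    ((hcd.fderiv_right (m := 1) (WithTop.coe_le_coe.mpr le_top)).differentiableAt one_ne_zero).hasFDerivAt
  have hsymm : ∀ v w, B v w = B w v := hcd.isSymmSndFDerivAt (by simp; exact WithTop.coe_le_coe.mpr le_top)
  have hDj : ∀ j, HasFDerivAt (fun y => fderiv ℝ u y (e j))
      ((ContinuousLinearMap.apply ℝ ℝ (e j)).comp B) x :=
    fun j => ((ContinuousLinearMap.apply ℝ ℝ (e j)).hasFDerivAt).comp x hBd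
  have hcoord : ∀ k, HasFDerivAt (fun y : EuclideanSpace ℝ (Fin (n + 1)) => y k)
      (EuclideanSpace.proj (𝕜 := ℝ) k) x := fun k => (EuclideanSpace.proj (𝕜 := ℝ) k).hasFDerivAt
  have hu1 : HasFDerivAt u (fderiv ℝ u x) x := hudiff.hasFDerivAt
  -- the second-derivative matrix entries
  set A : Fin (n + 1) → Fin (n + 1) → ℝ := fun k j => B (e k) (e j) with hA
  set D : Fin (n + 1) → ℝ := fun j => fderiv ℝ u x (e j) with hD
  -- trace of A is 1 (from Δu = 1)
  have htrace : ∑ i : Fin (n + 1), A i i = 1 := by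
    rw [← hΔ x hx]
    refine Finset.sum_congr rfl fun i _ => ?_
    rw [(hDj i).fderiv]
    simp [hA, he]
  -- derivatives of the ω's
  have hωd : ∀ k j : Fin (n + 1), k ≠ j →
      fderiv ℝ (ω k j) x (e k) = x k * A k j + D j - x j * A k k := by
    intro k j hkj
    have hfun : ω k j = fun y => y k * fderiv ℝ u y (e j) - y j * fderiv ℝ u y (e k) :=
      funext fun y => hω k j y
    have h1 := ((hcoord k).fun_mul (hDj j)).fun_sub ((hcoord j).fun_mul (hDj k))
    rw [← hfun] at h1
    rw [h1.fderiv]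
    simp only [ContinuousLinearMap.sub_apply, ContinuousLinearMap.add_apply,
      ContinuousLinearMap.smul_apply, ContinuousLinearMap.comp_apply,
      ContinuousLinearMap.apply_apply, PiLp.proj_apply, smul_eq_mul]
    rw [show (e k) k = 1 by simp [he, EuclideanSpace.single_apply],
      show (e k) j = 0 by simp [he, EuclideanSpace.single_apply, Ne.symm hkj]]
    ring
  -- derivative of ρ
  have hρd : fderiv ℝ ρ x (e (Fin.last n)) =
      x (Fin.last n) - (∑ i : Fin (n + 1), (x i * A (Fin.last n) i + D i * (e (Fin.last n)) i))
        - (((n : ℝ) + 1) - 2) * D (Fin.last n) := by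
    have hnorm : ∀ y : EuclideanSpace ℝ (Fin (n + 1)), ‖y‖ ^ 2 = ∑ i, y i * y i := by
      intro y
      rw [EuclideanSpace.norm_eq, Real.sq_sqrt (by positivity)]
      simp [sq_abs, sq]
    have hfun : ρ = fun y => (1 / 2 : ℝ) * (∑ i, y i * y i)
        - (∑ i, y i * fderiv ℝ u y (e i)) - (((n : ℝ) + 1) - 2) * u y := by
      funext y; rw [hρ y, hnorm y]; ring
    have h2 := (((HasFDerivAt.fun_sum
        (fun i (_ : i ∈ Finset.univ) => (hcoord i).fun_mul (hcoord i))).const_mul (1/2 : ℝ)).fun_sub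
        (HasFDerivAt.fun_sum (fun i (_ : i ∈ Finset.univ) => (hcoord i).fun_mul (hDj i)))).fun_sub
        (hu1.const_mul (((n : ℝ) + 1) - 2))
    rw [← hfun] at h2
    rw [h2.fderiv]
    simp only [ContinuousLinearMap.sub_apply, ContinuousLinearMap.add_apply,
      ContinuousLinearMap.smul_apply, ContinuousLinearMap.comp_apply, ContinuousLinearMap.sum_apply,
      ContinuousLinearMap.apply_apply, PiLp.proj_apply, smul_eq_mul]
    have hel : ∀ i, (e (Fin.last n)) i = if i = Fin.last n then 1 else 0 := fun i => by
      simp [he, EuclideanSpace.single_apply]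
    have h3 : ∑ i : Fin (n + 1), (x i * (e (Fin.last n)) i + x i * (e (Fin.last n)) i)
        = 2 * x (Fin.last n) := by
      rw [Finset.sum_eq_single (Fin.last n)]
      · rw [hel, if_pos rfl]; ring
      · intro i _ hi; rw [hel, if_neg hi]; ring
      · simp
    rw [h3]
    simp only [hA, hD]
    ring
  -- assemble
  have hωs : ∀ i : Fin n, fderiv ℝ (ω i.castSucc (Fin.last n)) x (e i.castSucc)
      = x i.castSucc * A i.castSucc (Fin.last n) + D (Fin.last n)
        - x (Fin.last n) * A i.castSucc i.castSucc :=
    fun i => hωd i.castSucc (Fin.last n) (Fin.castSucc_lt_last i).ne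
  have hel : ∀ i, (e (Fin.last n)) i = if i = Fin.last n then 1 else 0 := fun i => by
    simp [he, EuclideanSpace.single_apply]
  have key : (∑ i : Fin n, fderiv ℝ (ω i.castSucc (Fin.last n)) x (e i.castSucc))
        + fderiv ℝ ρ x (e (Fin.last n))
      = (∑ i : Fin n, (x i.castSucc * A i.castSucc (Fin.last n) + D (Fin.last n)
          - x (Fin.last n) * A i.castSucc i.castSucc))
        + (x (Fin.last n) - (∑ i : Fin (n + 1), (x i * A (Fin.last n) i + D i * (e (Fin.last n)) i))
          - (((n : ℝ) + 1) - 2) * D (Fin.last n)) := by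
    rw [hρd]; congr 1; exact Finset.sum_congr rfl fun i _ => hωs i
  rw [key]
  have h5 : ∑ i : Fin (n + 1), (x i * A (Fin.last n) i + D i * (e (Fin.last n)) i)
      = (∑ i : Fin n, x i.castSucc * A (Fin.last n) i.castSucc)
        + x (Fin.last n) * A (Fin.last n) (Fin.last n) + D (Fin.last n) := by
    have hDe : ∀ i : Fin (n + 1), D i * (e (Fin.last n)) i
        = if i = Fin.last n then D (Fin.last n) else 0 := by
      intro i; rw [hel]; split <;> simp_all
    simp_rw [hDe]
    rw [Finset.sum_add_distrib, Fin.sum_univ_castSucc]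
    simp [(Fin.castSucc_lt_last _).ne]
  have h6 : ∑ i : Fin n, A i.castSucc i.castSucc = 1 - A (Fin.last n) (Fin.last n) := by
    have h := htrace
    rw [Fin.sum_univ_castSucc] at h
    linarith
  have h7 : ∀ i : Fin n, A (Fin.last n) i.castSucc = A i.castSucc (Fin.last n) :=
    fun i => hsymm _ _
  rw [h5]
  simp_rw [h7]
  rw [Finset.sum_sub_distrib, Finset.sum_add_distrib, ← Finset.mul_sum, h6,
    Finset.sum_const, Finset.card_univ, Fintype.card_fin]
  ring
end
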